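/- arXiv:2011.11497 — 4 statements merged into one kernel-verified Lean document; each statement's English description precedes it below -/
import Mathlib

section
/- If A is a linear endomorphism of a finite-dimensional real inner product space V such that ρ(A)² > σ₁(A)·σ₂(A), where ρ(A) is the spectral radius and σ₁(A), σ₂(A) are the two largest singular values of A, then A is proximal, i.e., A has a unique eigenvalue of maximum modulus and that eigenvalue is simple. -/
open Polynomial

variable {V : Type*} [NormedAddCommGroup V] [InnerProductSpace ℝ V] [FiniteDimensional ℝ V]

/-- The multiset of complex eigenvalues of a real endomorphism (roots of the
characteristic polynomial over `ℂ`, with multiplicity). -/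
noncomputable def complexEigenvalues (A : V →ₗ[ℝ] V) : Multiset ℂ :=
  ((A.charpoly).map (algebraMap ℝ ℂ)).roots

/-- The spectral radius: the largest modulus of a complex eigenvalue. -/
noncomputable def specRadius (A : V →ₗ[ℝ] V) : ℝ :=
  sSup {r : ℝ | ∃ z ∈ complexEigenvalues A, ‖z‖ = r}

/-- `A` is proximal: it has a unique eigenvalue of maximum modulus and that
eigenvalue is algebraically simple. -/
def IsProximal (A : V →ₗ[ℝ] V) : Prop :=
  ∃ z ∈ complexEigenvalues A, (complexEigenvalues A).count z = 1 ∧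
    ∀ w ∈ complexEigenvalues A, w ≠ z → ‖w‖ < ‖z‖

/-- The `i`-th singular value (`i = 1` being the largest), via the min-max
characterisation `σ_i(A) = min { ‖A - F‖ : rank F < i }`. -/
noncomputable def singularValue (A : V →L[ℝ] V) (i : ℕ) : ℝ :=
  sInf {r : ℝ | ∃ F : V →L[ℝ] V, LinearMap.rank (F : V →ₗ[ℝ] V) < (i : Cardinal) ∧ r = ‖A - F‖}

open Module

/-!
For an `A`-invariant plane `W` and any `F` of rank at most one, choose an orthonormal basis `(u, v)`
of `W` with `F u = 0`; Hadamard's inequality gives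
`|det (A|W)| ≤ ‖A u‖ ‖A v‖ = ‖(A - F) u‖ ‖A v‖ ≤ ‖A - F‖ ‖A‖`, hence `|det (A|W)| ≤ σ₁ σ₂`.
If `A` is not proximal, two eigenvalues `z, w` of modulus `ρ(A)` occur in the multiset of
eigenvalues, and they span an invariant plane with `|det (A|W)| = ρ(A)²`: the real plane of a
non-real eigenvalue, two eigenvectors of distinct real eigenvalues, or, for a double real
eigenvalue, either a Jordan chain of length two or two independent eigenvectors.
-/

theorem Multiset.exists_pair_le_norm_eq {α : Type*} [DecidableEq α] [Norm α] {s : Multiset α}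
    {z : α} (hz : z ∈ s) (hmax : ∀ w ∈ s, ‖w‖ ≤ ‖z‖)
    (h : ¬(s.count z = 1 ∧ ∀ w ∈ s, w ≠ z → ‖w‖ < ‖z‖)) :
    ∃ w, {z, w} ≤ s ∧ ‖w‖ = ‖z‖ := by
  by_cases hc : s.count z = 1
  · obtain ⟨w, hw, hwz, hzw⟩ : ∃ w ∈ s, w ≠ z ∧ ‖z‖ ≤ ‖w‖ := by simpa [hc] using h
    refine ⟨w, (Multiset.le_iff_subset (by simp [hwz.symm])).mpr ?_, (hmax w hw).antisymm hzw⟩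
    simp [Multiset.subset_iff, hz, hw]
  · refine ⟨z, (Multiset.le_count_iff_replicate_le (n := 2)).mp ?_, rfl⟩
    have := Multiset.one_le_count_iff_mem.mpr hz
    omega

namespace Module.End

theorem maxGenEigenspace_le_eigenspace {R M : Type*} [CommRing R] [AddCommGroup M] [Module R M]
    (T : End R M) {c : R} (h : ∀ v, (T - c • 1) ((T - c • 1) v) = 0 → (T - c • 1) v = 0) :
    T.maxGenEigenspace c ≤ T.eigenspace c := by
  intro x hx
  obtain ⟨k, hk⟩ := (mem_maxGenEigenspace _ _ _).mp hx
  rw [eigenspace_def, LinearMap.mem_ker]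
  clear hx
  induction k generalizing x with
  | zero => simp_all
  | succ k ih => exact h x (ih (by rwa [pow_succ, mul_apply] at hk))

section Field

variable {K M : Type*} [Field K] [AddCommGroup M] [Module K M]

theorem exists_invariant_plane_det_eq (T : End K M) {v w : M}
    (hvw : LinearIndependent K ![v, w]) {a b c d : K}
    (hv : T v = a • v + b • w) (hw : T w = c • v + d • w) :
    ∃ (W : Submodule K M) (hW : ∀ x ∈ W, T x ∈ W),
      finrank K W = 2 ∧ LinearMap.det (T.restrict hW) = a * d - b * c := by
  let W := Submodule.span K (Set.range ![v, w])
  let e : Basis (Fin 2) K W := .span hvw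
  have he : ∀ i, (e i : M) = ![v, w] i := fun i => congrArg Subtype.val (Basis.span_apply hvw i)
  have hmem : ∀ i, ![v, w] i ∈ W := fun i => Submodule.subset_span ⟨i, rfl⟩
  have hW : ∀ x ∈ W, T x ∈ W := by
    refine fun x hx => (show W ≤ W.comap T from Submodule.span_le.mpr ?_) hx
    rintro _ ⟨i, rfl⟩
    fin_cases i
    · simpa [hv] using add_mem (W.smul_mem a (hmem 0)) (W.smul_mem b (hmem 1))
    · simpa [hw] using add_mem (W.smul_mem c (hmem 0)) (W.smul_mem d (hmem 1))
  refine ⟨W, hW, by simpa using finrank_span_eq_card hvw, ?_⟩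
  have h0 : T.restrict hW (e 0) = a • e 0 + b • e 1 := Subtype.ext (by simp [he, hv])
  have h1 : T.restrict hW (e 1) = c • e 0 + d • e 1 := Subtype.ext (by simp [he, hw])
  rw [← LinearMap.det_toMatrix e, Matrix.det_fin_two]
  simp [LinearMap.toMatrix_apply, h0, h1]
  ring

theorem exists_invariant_plane_det_eq_mul_of_hasEigenvector (T : End K M) {c d : K} {u v : M}
    (hu : T.HasEigenvector c u) (hv : T.HasEigenvector d v) (huv : LinearIndependent K ![u, v]) :
    ∃ (W : Submodule K M) (hW : ∀ x ∈ W, T x ∈ W),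
      finrank K W = 2 ∧ LinearMap.det (T.restrict hW) = c * d := by
  obtain ⟨W, hW, hfin, hdet⟩ :=
    exists_invariant_plane_det_eq T huv (a := c) (b := 0) (c := 0) (d := d)
      (by simp [hu.apply_eq_smul]) (by simp [hv.apply_eq_smul])
  exact ⟨W, hW, hfin, by simpa using hdet⟩

variable [FiniteDimensional K M]

theorem exists_invariant_plane_det_eq_mul_self (T : End K M) {c : K}
    (h : (X - C c) ^ 2 ∣ T.charpoly) :
    ∃ (W : Submodule K M) (hW : ∀ x ∈ W, T x ∈ W),
      finrank K W = 2 ∧ LinearMap.det (T.restrict hW) = c * c := by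
  set N := T - c • 1 with hN
  have hT : ∀ x, T x = c • x + N x := by simp [hN]
  by_cases! hchain : ∃ v, N (N v) = 0 ∧ N v ≠ 0
  · obtain ⟨v, hv2, hv1⟩ := hchain
    have hli : LinearIndependent K ![v, N v] := by
      refine (LinearIndependent.pair_iff' fun hv => hv1 (by simp [hv])).mpr fun a ha => hv1 ?_
      have : a • N v = 0 := by rw [← map_smul, ha, hv2]
      rcases smul_eq_zero.mp this with rfl | h
      · simpa using ha.symm
      · exact h
    obtain ⟨W, hW, hfin, hdet⟩ :=
      exists_invariant_plane_det_eq T hli (a := c) (b := 1) (c := 0) (d := c)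
        (by simp [hT v]) (by simp [hT (N v), hv2])
    exact ⟨W, hW, hfin, by simpa using hdet⟩
  · have hdim : 1 < finrank K (T.eigenspace c) := by
      calc 1 < 2 := one_lt_two
        _ ≤ T.charpoly.rootMultiplicity c :=
          (le_rootMultiplicity_iff (LinearMap.charpoly_monic T).ne_zero).mpr h
        _ = finrank K (T.maxGenEigenspace c) := (LinearMap.finrank_maxGenEigenspace_eq T c).symm
        _ ≤ finrank K (T.eigenspace c) :=
          Submodule.finrank_mono (T.maxGenEigenspace_le_eigenspace hchain)
    have : Nontrivial (T.eigenspace c) := Module.nontrivial_of_finrank_pos (one_pos.trans hdim)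
    obtain ⟨u, hu0⟩ := exists_ne (0 : T.eigenspace c)
    obtain ⟨v, huv⟩ := exists_linearIndependent_pair_of_one_lt_finrank hdim hu0
    have hli : LinearIndependent K ![(u : M), v] :=
      (LinearIndependent.pair_iff' (by simpa using hu0)).mpr fun a h =>
        (LinearIndependent.pair_iff' hu0).mp huv a (Subtype.ext (by simpa using h))
    exact exists_invariant_plane_det_eq_mul_of_hasEigenvector T
      (hasEigenvector_iff.mpr ⟨u.2, by simpa using hli.ne_zero 0⟩)
      (hasEigenvector_iff.mpr ⟨v.2, by simpa using hli.ne_zero 1⟩) hli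

theorem exists_invariant_plane_det_eq_mul (T : End K M) {c d : K}
    (h : (X - C c) * (X - C d) ∣ T.charpoly) :
    ∃ (W : Submodule K M) (hW : ∀ x ∈ W, T x ∈ W),
      finrank K W = 2 ∧ LinearMap.det (T.restrict hW) = c * d := by
  obtain rfl | hcd := eq_or_ne c d
  · exact exists_invariant_plane_det_eq_mul_self T (by rwa [sq])
  obtain ⟨u, hu⟩ := ((T.hasEigenvalue_iff_isRoot_charpoly c).mpr
    (dvd_iff_isRoot.mp (dvd_of_mul_right_dvd h))).exists_hasEigenvector
  obtain ⟨v, hv⟩ := ((T.hasEigenvalue_iff_isRoot_charpoly d).mpr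
    (dvd_iff_isRoot.mp (dvd_of_mul_left_dvd h))).exists_hasEigenvector
  refine exists_invariant_plane_det_eq_mul_of_hasEigenvector T hu hv
    (T.eigenvectors_linearIndependent' ![c, d] ?_ ![u, v] (Fin.forall_fin_two.mpr ⟨hu, hv⟩))
  intro i j
  fin_cases i <;> fin_cases j <;> simp [hcd, hcd.symm]

end Field

section Real

variable {M : Type*} [AddCommGroup M] [Module ℝ M] [FiniteDimensional ℝ M]

theorem exists_invariant_plane_det_eq_normSq (T : End ℝ M) {z : ℂ}
    (hz : (T.charpoly.map (algebraMap ℝ ℂ)).IsRoot z) (him : z.im ≠ 0) :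
    ∃ (W : Submodule ℝ M) (hW : ∀ x ∈ W, T x ∈ W),
      finrank ℝ W = 2 ∧ LinearMap.det (T.restrict hW) = Complex.normSq z := by
  set q : ℝ[X] := X ^ 2 - C (2 * z.re) * X + C (Complex.normSq z)
  have hq : q.map (algebraMap ℝ ℂ) = (C z - X) * (C ((starRingEnd ℂ) z) - X) := by
    have hre : algebraMap ℝ ℂ (2 * z.re) = z + (starRingEnd ℂ) z := by simp [Complex.add_conj]
    have hns : algebraMap ℝ ℂ (Complex.normSq z) = z * (starRingEnd ℂ) z := by
      simp [Complex.mul_conj]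
    rw [Polynomial.map_add, Polynomial.map_sub, Polynomial.map_mul, Polynomial.map_pow, map_X,
      map_C, map_C, hre, hns, C_add, C_mul]
    ring
  -- After complexification `q(T)` becomes `(z - T) * (z̄ - T)`, and `z - T` is singular.
  have hdet : LinearMap.det (aeval T q) = 0 := by
    apply (algebraMap ℝ ℂ).injective
    rw [← LinearMap.det_baseChange, map_zero,
      show (aeval T q).baseChange ℂ = baseChangeHom ℝ ℂ M (aeval T q) from rfl,
      ← aeval_algHom_apply, ← aeval_map_algebraMap ℂ, hq, map_mul, map_sub, aeval_C, aeval_X,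
      map_mul, ← LinearMap.eval_charpoly,
      show baseChangeHom ℝ ℂ M T = T.baseChange ℂ from rfl, LinearMap.charpoly_baseChange,
      hz.eq_zero, zero_mul]
  obtain ⟨x, hx, hx0⟩ :=
    Submodule.exists_mem_ne_zero_of_ne_bot (LinearMap.bot_lt_ker_of_det_eq_zero hdet).ne'
  have hTTx : T (T x) = (2 * z.re) • T x - Complex.normSq z • x := by
    have := LinearMap.mem_ker.mp hx
    simp only [q, map_add, map_sub, map_mul, aeval_C, aeval_X, LinearMap.add_apply,
      LinearMap.sub_apply, pow_two, mul_apply, Module.algebraMap_end_apply] at this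
    linear_combination (norm := module) this
  have hli : LinearIndependent ℝ ![x, T x] := by
    refine (LinearIndependent.pair_iff' hx0).mpr fun a ha => ?_
    have ha' : a • T x = T (T x) := by rw [← map_smul, ha]
    have : ((a - z.re) ^ 2 + z.im ^ 2) • x = 0 := by
      rw [Complex.normSq_apply] at hTTx
      linear_combination (norm := module) (a - 2 * z.re) • ha + ha' + hTTx
    have hsq : (a - z.re) ^ 2 + z.im ^ 2 = 0 := (smul_eq_zero.mp this).resolve_right hx0
    exact him (pow_eq_zero_iff two_ne_zero |>.mp (by nlinarith [sq_nonneg (a - z.re)]))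
  obtain ⟨W, hW, hfin, hdet⟩ := exists_invariant_plane_det_eq T hli (a := 0) (b := 1)
    (c := -Complex.normSq z) (d := 2 * z.re) (by simp) (by rw [hTTx]; module)
  exact ⟨W, hW, hfin, by simpa using hdet⟩

theorem exists_invariant_plane_abs_det_eq_sq (T : End ℝ M) {z w : ℂ}
    (h : {z, w} ≤ (T.charpoly.map (algebraMap ℝ ℂ)).roots) (hw : ‖w‖ = ‖z‖) :
    ∃ (W : Submodule ℝ M) (hW : ∀ x ∈ W, T x ∈ W),
      finrank ℝ W = 2 ∧ |LinearMap.det (T.restrict hW)| = ‖z‖ ^ 2 := by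
  have hroot : ∀ x ∈ ({z, w} : Multiset ℂ), (T.charpoly.map (algebraMap ℝ ℂ)).IsRoot x :=
    fun x hx => isRoot_of_mem_roots (Multiset.mem_of_le h hx)
  by_cases! hz : z.im ≠ 0
  · obtain ⟨W, hW, hfin, hdet⟩ := exists_invariant_plane_det_eq_normSq T (hroot z (by simp)) hz
    exact ⟨W, hW, hfin, by rw [hdet, Complex.normSq_eq_norm_sq, abs_sq]⟩
  by_cases! hw' : w.im ≠ 0
  · obtain ⟨W, hW, hfin, hdet⟩ := exists_invariant_plane_det_eq_normSq T (hroot w (by simp)) hw'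
    exact ⟨W, hW, hfin, by rw [hdet, Complex.normSq_eq_norm_sq, abs_sq, hw]⟩
  obtain ⟨c, rfl⟩ : ∃ c : ℝ, (c : ℂ) = z := ⟨z.re, Complex.ext (by simp) (by simp [hz])⟩
  obtain ⟨d, rfl⟩ : ∃ d : ℝ, (d : ℂ) = w := ⟨w.re, Complex.ext (by simp) (by simp [hw'])⟩
  have hdvd : (X - C c) * (X - C d) ∣ T.charpoly := by
    rw [← map_dvd_map' (algebraMap ℝ ℂ)]
    simpa using (Multiset.prod_X_sub_C_dvd_iff_le_roots
      ((LinearMap.charpoly_monic T).map _).ne_zero _).mpr h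
  obtain ⟨W, hW, hfin, hdet⟩ := exists_invariant_plane_det_eq_mul T hdvd
  refine ⟨W, hW, hfin, ?_⟩
  simp only [Complex.norm_real, Real.norm_eq_abs] at hw ⊢
  rw [hdet, abs_mul, hw, sq]

end Real

end Module.End

theorem OrthonormalBasis.abs_det_le_prod_norm_apply {E : Type*} [NormedAddCommGroup E]
    [InnerProductSpace ℝ E] {n : ℕ} (b : OrthonormalBasis (Fin n) ℝ E) (f : E →ₗ[ℝ] E) :
    |LinearMap.det f| ≤ ∏ i, ‖f (b i)‖ := by
  have : Fact (finrank ℝ E = n) := ⟨by simpa using finrank_eq_card_basis b.toBasis⟩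
  let o : Orientation ℝ E (Fin n) := b.toBasis.orientation
  calc |LinearMap.det f| = |b.toBasis.det (f ∘ b)| := by
        rw [← b.coe_toBasis, Basis.det_comp, Basis.det_self, mul_one]
    _ = |o.volumeForm (f ∘ b)| := (o.volumeForm_robust' b _).symm
    _ ≤ ∏ i, ‖f (b i)‖ := o.abs_volumeForm_apply_le _

theorem abs_det_restrict_le_norm_sub_mul_norm (A F : V →L[ℝ] V)
    (hF : LinearMap.rank (F : V →ₗ[ℝ] V) < 2) {W : Submodule ℝ V}
    (hW : ∀ x ∈ W, (A : V →ₗ[ℝ] V) x ∈ W) (hfin : finrank ℝ W = 2) :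
    |LinearMap.det ((A : V →ₗ[ℝ] V).restrict hW)| ≤ ‖A - F‖ * ‖A‖ := by
  have hker : LinearMap.ker ((F : V →ₗ[ℝ] V) ∘ₗ W.subtype) ≠ ⊥ := by
    have hrange : finrank ℝ (LinearMap.range ((F : V →ₗ[ℝ] V) ∘ₗ W.subtype)) < 2 := by
      refine lt_of_le_of_lt (Submodule.finrank_mono (LinearMap.range_comp_le_range _ _)) ?_
      rw [LinearMap.rank, ← finrank_eq_rank] at hF
      exact_mod_cast hF
    have := LinearMap.finrank_range_add_finrank_ker ((F : V →ₗ[ℝ] V) ∘ₗ W.subtype)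
    refine fun h => ?_
    rw [h, finrank_bot, hfin] at this
    omega
  obtain ⟨w, hwF, hw0⟩ := Submodule.exists_mem_ne_zero_of_ne_bot hker
  obtain ⟨b, hb⟩ := Orthonormal.exists_orthonormalBasis_extension_of_card_eq (𝕜 := ℝ)
    (ι := Fin 2) (by simpa using hfin) (v := fun _ => ‖w‖⁻¹ • w) (s := {0})
    (by
      rw [orthonormal_iff_ite]
      intro i j
      simp [Subsingleton.elim i j, norm_smul, hw0])
  have hFw : F w = 0 := hwF
  have hb0 : F (b 0) = 0 := by simp [hb 0 rfl, hFw]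
  calc |LinearMap.det ((A : V →ₗ[ℝ] V).restrict hW)| ≤ ‖A (b 0)‖ * ‖A (b 1)‖ := by
        simpa using b.abs_det_le_prod_norm_apply ((A : V →ₗ[ℝ] V).restrict hW)
    _ = ‖(A - F) (b 0)‖ * ‖A (b 1)‖ := by simp [hb0]
    _ ≤ ‖A - F‖ * ‖A‖ := by
        gcongr
        · exact (A - F).unit_le_opNorm _ (b.orthonormal.1 0).le
        · exact A.unit_le_opNorm _ (b.orthonormal.1 1).le

theorem singularValue_nonneg {E : Type*} [NormedAddCommGroup E] [InnerProductSpace ℝ E]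
    (A : E →L[ℝ] E) (i : ℕ) : 0 ≤ singularValue A i :=
  Real.sInf_nonneg (by rintro _ ⟨F, -, rfl⟩; exact norm_nonneg _)

theorem singularValue_one {E : Type*} [NormedAddCommGroup E] [InnerProductSpace ℝ E]
    (A : E →L[ℝ] E) : singularValue A 1 = ‖A‖ := by
  have : {r : ℝ | ∃ F : E →L[ℝ] E, LinearMap.rank (F : E →ₗ[ℝ] E) < ((1 : ℕ) : Cardinal) ∧
      r = ‖A - F‖} = {‖A‖} := by
    ext r
    refine ⟨?_, fun hr => ⟨0, by simp, by simpa using hr⟩⟩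
    rintro ⟨F, hF, rfl⟩
    have : (F : E →ₗ[ℝ] E) = 0 := LinearMap.range_eq_bot.mp (by simpa using hF)
    simp [show F = 0 from ContinuousLinearMap.coe_injective this]
  rw [singularValue, this, csInf_singleton]

theorem abs_det_restrict_le_singularValue_mul (A : V →L[ℝ] V) {W : Submodule ℝ V}
    (hW : ∀ x ∈ W, (A : V →ₗ[ℝ] V) x ∈ W) (hfin : finrank ℝ W = 2) :
    |LinearMap.det ((A : V →ₗ[ℝ] V).restrict hW)| ≤ singularValue A 1 * singularValue A 2 := by
  rw [singularValue_one, singularValue, ← smul_eq_mul, ← Real.sInf_smul_of_nonneg (norm_nonneg A)]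
  refine le_csInf ⟨_, ‖A - 0‖, ⟨0, by simp, rfl⟩, rfl⟩ ?_
  rintro _ ⟨_, ⟨F, hF, rfl⟩, rfl⟩
  simpa [mul_comm] using abs_det_restrict_le_norm_sub_mul_norm A F (by exact_mod_cast hF) hW hfin

theorem exists_mem_complexEigenvalues_norm_eq_specRadius (T : V →ₗ[ℝ] V) (h : specRadius T ≠ 0) :
    ∃ z ∈ complexEigenvalues T, ‖z‖ = specRadius T ∧ ∀ w ∈ complexEigenvalues T, ‖w‖ ≤ ‖z‖ := by
  set S := {r : ℝ | ∃ z ∈ complexEigenvalues T, ‖z‖ = r}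
  have hfin : S.Finite :=
    ((complexEigenvalues T).finite_toSet.image norm).subset
      (by rintro _ ⟨z, hz, rfl⟩; exact ⟨z, hz, rfl⟩)
  have hne : S.Nonempty := Set.nonempty_iff_ne_empty.mpr fun hS => h (by simp [specRadius, S, hS])
  obtain ⟨z, hz, hzS⟩ := hne.csSup_mem hfin
  exact ⟨z, hz, hzS, fun w hw => hzS ▸ le_csSup hfin.bddAbove ⟨w, hw, rfl⟩⟩

theorem proximal_of_specRadius_sq_gt (A : V →L[ℝ] V)
    (h : specRadius (A : V →ₗ[ℝ] V) ^ 2 > singularValue A 1 * singularValue A 2) :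
    IsProximal (A : V →ₗ[ℝ] V) := by
  by_contra hP
  have hσ : 0 ≤ singularValue A 1 * singularValue A 2 :=
    mul_nonneg (singularValue_nonneg A 1) (singularValue_nonneg A 2)
  have hρ : specRadius (A : V →ₗ[ℝ] V) ≠ 0 := fun h0 => by simp [h0] at h; linarith
  obtain ⟨z, hz, hzρ, hmax⟩ := exists_mem_complexEigenvalues_norm_eq_specRadius _ hρ
  obtain ⟨w, hzw, hw⟩ := Multiset.exists_pair_le_norm_eq hz hmax fun hz' => hP ⟨z, hz, hz'⟩
  obtain ⟨W, hW, hfin, hdet⟩ := Module.End.exists_invariant_plane_abs_det_eq_sq _ hzw hw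
  have := abs_det_restrict_le_singularValue_mul A hW hfin
  rw [hdet, hzρ] at this
  linarith
end

section
/- Let V be a finite-dimensional real vector space and let S ⊆ GL(V) be a semigroup acting on the Grassmannian of V. If U is a nonzero linear subspace of V whose orbit 𝒰 := {gU : g ∈ S} under S is finite, then U ∈ 𝒰, and moreover for every U₁ ∈ 𝒰 one has {gU₁ : g ∈ S} = 𝒰, i.e., the action of S on the orbit of U is transitive from every point. -/
variable {V : Type*} [AddCommGroup V] [Module ℝ V] [FiniteDimensional ℝ V]

private lemma map_mul_eq (a b : V ≃ₗ[ℝ] V) (U : Submodule ℝ V) :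
    Submodule.map ((a * b : V ≃ₗ[ℝ] V) : V →ₗ[ℝ] V) U
      = Submodule.map (a : V →ₗ[ℝ] V) (Submodule.map (b : V →ₗ[ℝ] V) U) := by
  rw [← Submodule.map_comp]
  rfl

private lemma map_pow_add (g : V ≃ₗ[ℝ] V) (m n : ℕ) (U : Submodule ℝ V) :
    Submodule.map ((g ^ (m + n) : V ≃ₗ[ℝ] V) : V →ₗ[ℝ] V) U
      = Submodule.map ((g ^ m : V ≃ₗ[ℝ] V) : V →ₗ[ℝ] V)
          (Submodule.map ((g ^ n : V ≃ₗ[ℝ] V) : V →ₗ[ℝ] V) U) := by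
  rw [pow_add, map_mul_eq]

private lemma key (S : Set (V ≃ₗ[ℝ] V)) (hmul : ∀ g ∈ S, ∀ h ∈ S, g * h ∈ S)
    (U : Submodule ℝ V)
    (horb : {W : Submodule ℝ V | ∃ g ∈ S, W = Submodule.map (g : V →ₗ[ℝ] V) U}.Finite)
    (g : V ≃ₗ[ℝ] V) (hg : g ∈ S) :
    ∃ k ∈ S, Submodule.map (k : V →ₗ[ℝ] V) (Submodule.map (g : V →ₗ[ℝ] V) U) = U := by
  have hpow : ∀ n : ℕ, 1 ≤ n → g ^ n ∈ S := by
    intro n hn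
    induction n with
    | zero => omega
    | succ m ih =>
      rcases Nat.eq_or_lt_of_le hn with h | h
      · simpa [← h] using hg
      · have hm : 1 ≤ m := by omega
        rw [pow_succ]
        exact hmul _ (ih hm) _ hg
  -- pigeonhole
  have hmaps : Set.MapsTo (fun n : ℕ => Submodule.map ((g ^ n : V ≃ₗ[ℝ] V) : V →ₗ[ℝ] V) U)
      (Set.Ici 1) {W : Submodule ℝ V | ∃ g ∈ S, W = Submodule.map (g : V →ₗ[ℝ] V) U} := by
    intro n hn
    exact ⟨g ^ n, hpow n hn, rfl⟩
  obtain ⟨m, hm, n, hn, hne, heq⟩ :=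
    (Set.Ici_infinite 1).exists_ne_map_eq_of_mapsTo hmaps horb
  -- wlog m < n
  wlog hlt : m < n generalizing m n
  · exact this n hn m hm hne.symm heq.symm (by omega)
  -- cancel g^m
  have hinj : Function.Injective (Submodule.map ((g ^ m : V ≃ₗ[ℝ] V) : V →ₗ[ℝ] V)) :=
    Submodule.map_injective_of_injective (g ^ m).injective
  set p := n - m with hp
  have hpge : 1 ≤ p := by omega
  have hcanc : Submodule.map ((g ^ p : V ≃ₗ[ℝ] V) : V →ₗ[ℝ] V) U = U := by
    apply hinj
    have : m + p = n := by omega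
    rw [← map_pow_add, this]
    exact heq.symm
  -- k = g ^ (2p - 1)
  refine ⟨g ^ (2 * p - 1), hpow _ (by omega), ?_⟩
  have h1 : (2 * p - 1) + 1 = p + p := by omega
  calc Submodule.map ((g ^ (2 * p - 1) : V ≃ₗ[ℝ] V) : V →ₗ[ℝ] V)
        (Submodule.map (g : V →ₗ[ℝ] V) U)
      = Submodule.map ((g ^ ((2 * p - 1) + 1) : V ≃ₗ[ℝ] V) : V →ₗ[ℝ] V) U := by
        rw [map_pow_add]; simp [pow_one]
    _ = Submodule.map ((g ^ p : V ≃ₗ[ℝ] V) : V →ₗ[ℝ] V)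
        (Submodule.map ((g ^ p : V ≃ₗ[ℝ] V) : V →ₗ[ℝ] V) U) := by
        rw [h1, map_pow_add]
    _ = U := by rw [hcanc, hcanc]

/-- If a nonempty subsemigroup `S` of `GL(V)` has a finite orbit
`𝒰 = {gU : g ∈ S}` of a nonzero subspace `U`, then `U ∈ 𝒰` and the action of `S`
on `𝒰` is transitive from every point. -/
theorem finite_orbit_transitive (S : Set (V ≃ₗ[ℝ] V))
    (hSne : S.Nonempty) (hmul : ∀ g ∈ S, ∀ h ∈ S, g * h ∈ S)
    (U : Submodule ℝ V) (hU : U ≠ ⊥)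
    (horb : {W : Submodule ℝ V | ∃ g ∈ S, W = Submodule.map (g : V →ₗ[ℝ] V) U}.Finite) :
    U ∈ {W : Submodule ℝ V | ∃ g ∈ S, W = Submodule.map (g : V →ₗ[ℝ] V) U} ∧
    ∀ U₁ ∈ {W : Submodule ℝ V | ∃ g ∈ S, W = Submodule.map (g : V →ₗ[ℝ] V) U},
      {W : Submodule ℝ V | ∃ g ∈ S, W = Submodule.map (g : V →ₗ[ℝ] V) U₁} =
        {W : Submodule ℝ V | ∃ g ∈ S, W = Submodule.map (g : V →ₗ[ℝ] V) U} := by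
  constructor
  · obtain ⟨g, hg⟩ := hSne
    obtain ⟨k, hk, hkeq⟩ := key S hmul U horb g hg
    exact ⟨k * g, hmul _ hk _ hg, by rw [map_mul_eq, hkeq]⟩
  · rintro U₁ ⟨g, hg, rfl⟩
    ext W
    constructor
    · rintro ⟨h, hh, rfl⟩
      exact ⟨h * g, hmul _ hh _ hg, by rw [map_mul_eq]⟩
    · rintro ⟨h, hh, rfl⟩
      obtain ⟨k, hk, hkeq⟩ := key S hmul U horb g hg
      exact ⟨h * k, hmul _ hh _ hk, by rw [map_mul_eq, hkeq]⟩
end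

section
/- Let V₁,…,V_k be finite-dimensional real vector spaces and for each j let (A₁^{(j)},…,A_N^{(j)}) ∈ GL(V_j)^N. Suppose 𝒲 is an equivariant subspace class with the property that for every (W_j)_j ∈ 𝒲 and every integer n ≥ 1, the set {(A_𝚒^{(j)} W_j)_j : 𝚒 a word whose length is divisible by n} equals all of 𝒲. Then 𝒲 is primitive, i.e., there exists an integer p ≥ 1 such that for every (W_j)_j ∈ 𝒲, {(A_𝚒^{(j)} W_j)_j : 𝚒 a word of length exactly p} = 𝒲. -/
/-- The product `A_{i₁}^{(j)} ⋯ A_{i_n}^{(j)}` corresponding to a word. -/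
def wordProd {V : Type*} [AddCommGroup V] [Module ℝ V] {N : ℕ}
    (B : Fin N → (V ≃ₗ[ℝ] V)) (l : List (Fin N)) : V ≃ₗ[ℝ] V :=
  (l.map B).prod

lemma wordProd_append {V : Type*} [AddCommGroup V] [Module ℝ V] {N : ℕ}
    (B : Fin N → (V ≃ₗ[ℝ] V)) (l₁ l₂ : List (Fin N)) :
    wordProd B (l₁ ++ l₂) = wordProd B l₁ * wordProd B l₂ := by
  simp [wordProd]

lemma map_wordProd_append {V : Type*} [AddCommGroup V] [Module ℝ V] {N : ℕ}
    (B : Fin N → (V ≃ₗ[ℝ] V)) (l₁ l₂ : List (Fin N)) (W : Submodule ℝ V) :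
    Submodule.map (wordProd B (l₁ ++ l₂) : V →ₗ[ℝ] V) W =
      Submodule.map (wordProd B l₁ : V →ₗ[ℝ] V)
        (Submodule.map (wordProd B l₂ : V →ₗ[ℝ] V) W) := by
  rw [wordProd_append, ← Submodule.map_comp]
  rfl

/-- Reachability in exactly `n` steps. -/
def WordRel {k N : ℕ} (V : Fin k → Type*) [∀ j, AddCommGroup (V j)] [∀ j, Module ℝ (V j)]
    (A : ∀ j, Fin N → (V j ≃ₗ[ℝ] V j)) (n : ℕ) (W W' : ∀ j, Submodule ℝ (V j)) : Prop :=
  ∃ l : List (Fin N), l.length = n ∧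
    W' = fun j => Submodule.map (wordProd (A j) l : V j →ₗ[ℝ] V j) (W j)

lemma Rel_refl {k N : ℕ} (V : Fin k → Type*) [∀ j, AddCommGroup (V j)] [∀ j, Module ℝ (V j)]
    (A : ∀ j, Fin N → (V j ≃ₗ[ℝ] V j)) (W : ∀ j, Submodule ℝ (V j)) :
    WordRel V A 0 W W := by
  refine ⟨[], rfl, ?_⟩
  funext j
  simp [wordProd]

lemma Rel_trans {k N : ℕ} {V : Fin k → Type*} [∀ j, AddCommGroup (V j)] [∀ j, Module ℝ (V j)]
    {A : ∀ j, Fin N → (V j ≃ₗ[ℝ] V j)} {m n : ℕ} {W W' W'' : ∀ j, Submodule ℝ (V j)}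
    (h₁ : WordRel V A m W W') (h₂ : WordRel V A n W' W'') : WordRel V A (m + n) W W'' := by
  obtain ⟨l, hl, rfl⟩ := h₁
  obtain ⟨l', hl', rfl⟩ := h₂
  refine ⟨l' ++ l, by simp [hl, hl', Nat.add_comm], ?_⟩
  funext j
  rw [map_wordProd_append]

/-- An equivariant subspace class in which any element can be carried to any other
by words of length divisible by any prescribed `n` is primitive. -/
theorem primitive_of_divisible_transitivity
    {k N : ℕ} (V : Fin k → Type*) [∀ j, AddCommGroup (V j)] [∀ j, Module ℝ (V j)]
    [∀ j, FiniteDimensional ℝ (V j)]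
    (A : ∀ j, Fin N → (V j ≃ₗ[ℝ] V j))
    (𝒲 : Set (∀ j, Submodule ℝ (V j)))
    (hfin : 𝒲.Finite) (hne : 𝒲.Nonempty)
    (hnz : ∀ W ∈ 𝒲, ∀ j, W j ≠ ⊥)
    (hequi : ∀ W ∈ 𝒲, ∀ l : List (Fin N), l ≠ [] →
      (fun j => Submodule.map (wordProd (A j) l : V j →ₗ[ℝ] V j) (W j)) ∈ 𝒲)
    (hdiv : ∀ W ∈ 𝒲, ∀ n : ℕ, 1 ≤ n →
      {W' | ∃ l : List (Fin N), l ≠ [] ∧ n ∣ l.length ∧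
        W' = fun j => Submodule.map (wordProd (A j) l : V j →ₗ[ℝ] V j) (W j)} = 𝒲) :
    ∃ p : ℕ, 1 ≤ p ∧ ∀ W ∈ 𝒲,
      {W' | ∃ l : List (Fin N), l.length = p ∧
        W' = fun j => Submodule.map (wordProd (A j) l : V j →ₗ[ℝ] V j) (W j)} = 𝒲 := by
  classical
  obtain ⟨W₀, hW₀⟩ := hne
  -- reachability at lengths divisible by any n
  have F1 : ∀ W ∈ 𝒲, ∀ W' ∈ 𝒲, ∀ n : ℕ, 1 ≤ n →
      ∃ m : ℕ, n ∣ m ∧ 1 ≤ m ∧ WordRel V A m W W' := by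
    intro W hW W' hW' n hn
    have hs := hdiv W hW n hn
    rw [← hs] at hW'
    obtain ⟨l, hlne, hdvd, heq⟩ := hW'
    exact ⟨l.length, hdvd, List.length_pos_iff.mpr hlne, ⟨l, rfl, heq⟩⟩
  -- positive-length reachability stays in 𝒲
  have F2 : ∀ W ∈ 𝒲, ∀ m : ℕ, 1 ≤ m → ∀ W', WordRel V A m W W' → W' ∈ 𝒲 := by
    intro W hW m hm W' hR
    obtain ⟨l, hl, heq⟩ := hR
    have hlne : l ≠ [] := by
      intro h; subst h; simp at hl; omega
    subst heq
    exact hequi W hW l hlne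
  -- get a letter i₀
  obtain ⟨m₁, -, hm₁, l₀, hl₀, -⟩ := F1 W₀ hW₀ W₀ hW₀ 1 le_rfl
  have hl₀ne : l₀ ≠ [] := by intro h; subst h; simp at hl₀; omega
  obtain ⟨i₀, t₀, rfl⟩ := List.exists_cons_of_ne_nil hl₀ne
  set W₁ : ∀ j, Submodule ℝ (V j) :=
    fun j => Submodule.map (wordProd (A j) [i₀] : V j →ₗ[ℝ] V j) (W₀ j) with hW₁def
  have hRW₁ : WordRel V A 1 W₀ W₁ := ⟨[i₀], rfl, rfl⟩
  have hW₁ : W₁ ∈ 𝒲 := hequi W₀ hW₀ [i₀] (by simp)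
  -- return time q ≥ 2
  obtain ⟨b, -, hb1, hRb⟩ := F1 W₁ hW₁ W₀ hW₀ 1 le_rfl
  set q := 1 + b with hqdef
  have hRq : WordRel V A q W₀ W₀ := Rel_trans hRW₁ hRb
  have hq2 : 2 ≤ q := by omega
  -- return time r coprime to q
  obtain ⟨b', hqb', hb'1, hRb'⟩ := F1 W₁ hW₁ W₀ hW₀ q (by omega)
  set r := 1 + b' with hrdef
  have hRr : WordRel V A r W₀ W₀ := Rel_trans hRW₁ hRb'
  have hr2 : 2 ≤ r := by
    have := Nat.le_of_dvd (by omega) hqb'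
    omega
  have hcop : Nat.Coprime q r := by
    obtain ⟨t, ht⟩ := hqb'
    have : Nat.gcd q (1 + q * t) = 1 := by
      rw [Nat.gcd_add_mul_left_right q 1 t, Nat.gcd_one_right]
    simpa [Nat.Coprime, hrdef, ht] using this
  -- multiples of return times
  have hRmul : ∀ s : ℕ, WordRel V A s W₀ W₀ → ∀ a : ℕ, WordRel V A (a * s) W₀ W₀ := by
    intro s hs a
    induction a with
    | zero => simpa using Rel_refl V A W₀
    | succ a ih =>
        have := Rel_trans ih hs
        simpa [Nat.succ_mul] using this
  have hqr4 : 4 ≤ q * r := by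
    calc (4 : ℕ) = 2 * 2 := rfl
    _ ≤ q * r := Nat.mul_le_mul hq2 hr2
  -- Chicken McNugget
  have key : ∀ s : ℕ, q * r ≤ s → ∃ a b : ℕ, s = a * q + b * r := by
    intro s hs
    have hfr := frobeniusNumber_pair hcop hq2 hr2
    have hmem : s ∈ AddSubmonoid.closure ({q, r} : Set ℕ) := by
      by_contra h
      have := hfr.2 h
      omega
    rw [AddSubmonoid.mem_closure_pair] at hmem
    obtain ⟨a, b, hab⟩ := hmem
    exact ⟨a, b, by simpa [smul_eq_mul] using hab.symm⟩
  -- all large lengths are return times of W₀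
  have key2 : ∀ s : ℕ, q * r + q + r ≤ s → WordRel V A s W₀ W₀ := by
    intro s hs
    obtain ⟨a, b, hab⟩ := key (s - q - r) (by omega)
    have hRs : WordRel V A (a * q + q + (b * r + r)) W₀ W₀ :=
      Rel_trans (Rel_trans (hRmul q hRq a) hRq) (Rel_trans (hRmul r hRr b) hRr)
    have hseq : a * q + q + (b * r + r) = s := by omega
    rwa [hseq] at hRs
  -- words to and from W₀, with uniform length bound
  obtain ⟨g, hg⟩ : ∃ g : (∀ j, Submodule ℝ (V j)) → ℕ,
      ∀ W ∈ 𝒲, WordRel V A (g W) W W₀ := by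
    refine ⟨fun W => if h : W ∈ 𝒲 then (F1 W h W₀ hW₀ 1 le_rfl).choose else 0, ?_⟩
    intro W h
    simp only [dif_pos h]
    exact (F1 W h W₀ hW₀ 1 le_rfl).choose_spec.2.2
  obtain ⟨g', hg'⟩ : ∃ g' : (∀ j, Submodule ℝ (V j)) → ℕ,
      ∀ W ∈ 𝒲, WordRel V A (g' W) W₀ W := by
    refine ⟨fun W => if h : W ∈ 𝒲 then (F1 W₀ hW₀ W h 1 le_rfl).choose else 0, ?_⟩
    intro W h
    simp only [dif_pos h]
    exact (F1 W₀ hW₀ W h 1 le_rfl).choose_spec.2.2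
  set M := hfin.toFinset.sup g + hfin.toFinset.sup g' with hMdef
  have hbound : ∀ W ∈ 𝒲, ∀ W' ∈ 𝒲, g W + g' W' ≤ M := by
    intro W hW W' hW'
    exact Nat.add_le_add (Finset.le_sup (hfin.mem_toFinset.mpr hW))
      (Finset.le_sup (hfin.mem_toFinset.mpr hW'))
  refine ⟨q * r + q + r + M, by omega, ?_⟩
  intro W hW
  ext W'
  simp only [Set.mem_setOf_eq]
  constructor
  · rintro ⟨l, hl, heq⟩
    exact F2 W hW _ (by omega) W' ⟨l, hl, heq⟩
  · intro hW'
    have hM := hbound W hW W' hW'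
    set s := q * r + q + r + M - g W - g' W' with hsdef
    have hRs : WordRel V A s W₀ W₀ := key2 s (by omega)
    have hfull : WordRel V A (g W + (s + g' W')) W W' :=
      Rel_trans (hg W hW) (Rel_trans hRs (hg' W' hW'))
    have hlen : g W + (s + g' W') = q * r + q + r + M := by omega
    rwa [hlen] at hfull
end

section
/- Let μ be an ergodic shift-invariant Borel probability measure on Σ_N which is ergodic but not ergodic for σⁿ (for some n > 1), with Z ⊆ Σ_N a Borel set such that σ⁻ⁿZ = Z up to μ-measure zero and Z, σ⁻¹Z, …, σ^{-(n-1)}Z partition Σ_N up to μ-measure zero. Define ν(A) := μ(A ∩ Z)/μ(Z). Then μ(Z) = 1/n, μ = (1/n)·Σ_{i=0}^{n-1} σ^i_*ν, each measure σ^i_*ν is σⁿ-invariant, and the measures σ^i_*ν for i = 0, …, n−1 are pairwise mutually singular. -/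
open MeasureTheory

variable {N : ℕ}

/-- The shift map on `Σ_N = {1,…,N}^ℕ`. -/
def shift (x : ℕ → Fin N) : ℕ → Fin N := fun k => x (k + 1)

/-- Decomposition of an ergodic but not `σⁿ`-ergodic shift-invariant measure over a
cyclically moved set `Z`. -/
theorem cyclic_decomposition (μ : Measure (ℕ → Fin N)) [IsProbabilityMeasure μ]
    (herg : Ergodic (shift (N := N)) μ)
    (n : ℕ) (hn : 1 < n)
    (hnoterg : ¬ Ergodic ((shift (N := N))^[n]) μ)
    (Z : Set (ℕ → Fin N)) (hZ : MeasurableSet Z)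
    (hinvZ : μ (symmDiff ((shift (N := N))^[n] ⁻¹' Z) Z) = 0)
    (hdisj : ∀ i j, i < n → j < n → i ≠ j →
      μ (((shift (N := N))^[i] ⁻¹' Z) ∩ ((shift (N := N))^[j] ⁻¹' Z)) = 0)
    (hcover : μ (⋃ i ∈ Finset.range n, (shift (N := N))^[i] ⁻¹' Z)ᶜ = 0) :
    μ Z = (n : ENNReal)⁻¹ ∧
    μ = (n : ENNReal)⁻¹ • ∑ i ∈ Finset.range n,
        Measure.map ((shift (N := N))^[i]) ((μ Z)⁻¹ • μ.restrict Z) ∧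
    (∀ i, i < n →
      Measure.map ((shift (N := N))^[n])
          (Measure.map ((shift (N := N))^[i]) ((μ Z)⁻¹ • μ.restrict Z)) =
        Measure.map ((shift (N := N))^[i]) ((μ Z)⁻¹ • μ.restrict Z)) ∧
    (∀ i j, i < n → j < n → i ≠ j →
      (Measure.map ((shift (N := N))^[i]) ((μ Z)⁻¹ • μ.restrict Z)).MutuallySingular
        (Measure.map ((shift (N := N))^[j]) ((μ Z)⁻¹ • μ.restrict Z))) := by
  set T := shift (N := N) with hTdef
  have hT : Measurable T := measurable_pi_lambda _ (fun k => measurable_pi_apply _)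
  have hTi : ∀ i, Measurable (T^[i]) := fun i => hT.iterate i
  have hmp : ∀ i, MeasurePreserving (T^[i]) μ μ :=
    fun i => herg.toMeasurePreserving.iterate i
  have hZi : ∀ i, MeasurableSet (T^[i] ⁻¹' Z) := fun i => (hTi i) hZ
  have hn0 : (n : ENNReal) ≠ 0 := by exact_mod_cast (by omega : n ≠ 0)
  have hntop : (n : ENNReal) ≠ ⊤ := ENNReal.natCast_ne_top n
  -- Z is a.e. invariant under T^[n]
  have hZeq : (T^[n] ⁻¹' Z : Set _) =ᵐ[μ] Z := measure_symmDiff_eq_zero_iff.mp hinvZ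
  -- the union has full measure
  have hUm : MeasurableSet (⋃ i ∈ Finset.range n, T^[i] ⁻¹' Z) :=
    MeasurableSet.biUnion (Finset.range n).countable_toSet (fun i _ => hZi i)
  have hU1 : μ (⋃ i ∈ Finset.range n, T^[i] ⁻¹' Z) = 1 :=
    (prob_compl_eq_zero_iff hUm).mp hcover
  -- the measure of Z
  have hμZ : μ Z = (n : ENNReal)⁻¹ := by
    have hsum : μ (⋃ i ∈ Finset.range n, T^[i] ⁻¹' Z)
        = ∑ i ∈ Finset.range n, μ (T^[i] ⁻¹' Z) :=
      measure_biUnion_finset₀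
        (fun i hi j hj hij => hdisj i j (Finset.mem_range.mp hi) (Finset.mem_range.mp hj) hij)
        (fun i _ => (hZi i).nullMeasurableSet)
    have hterm : ∀ i ∈ Finset.range n, μ (T^[i] ⁻¹' Z) = μ Z :=
      fun i _ => (hmp i).measure_preimage hZ.nullMeasurableSet
    rw [Finset.sum_congr rfl hterm, Finset.sum_const, Finset.card_range, hU1] at hsum
    have : (n : ENNReal) * μ Z = 1 := by
      rw [nsmul_eq_mul] at hsum; exact hsum.symm
    calc μ Z = (n : ENNReal)⁻¹ * ((n : ENNReal) * μ Z) := by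
          rw [← mul_assoc, ENNReal.inv_mul_cancel hn0 hntop, one_mul]
      _ = (n : ENNReal)⁻¹ := by rw [this, mul_one]
  -- the inverse of μ Z
  have hinvμZ : (μ Z)⁻¹ = (n : ENNReal) := by rw [hμZ, inv_inv]
  -- value of the pushed-forward measures
  have hval : ∀ (i : ℕ) (A : Set (ℕ → Fin N)), MeasurableSet A →
      (Measure.map (T^[i]) ((μ Z)⁻¹ • μ.restrict Z)) A = n * μ ((T^[i] ⁻¹' A) ∩ Z) := by
    intro i A hA
    rw [Measure.map_smul, Measure.smul_apply, Measure.map_apply (hTi i) hA,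
      Measure.restrict_apply ((hTi i) hA), hinvμZ, smul_eq_mul]
  -- key lemma : transfer the preimage from A to Z
  have key : ∀ (i : ℕ), i < n → ∀ A : Set (ℕ → Fin N), MeasurableSet A →
      μ ((T^[i] ⁻¹' A) ∩ Z) = μ (A ∩ (T^[(n - i) % n] ⁻¹' Z)) := by
    intro i hi A hA
    rcases Nat.eq_zero_or_pos i with h0 | hpos
    · subst h0
      simp [Nat.mod_self]
    · have h1 : (n - i) % n = n - i := Nat.mod_eq_of_lt (by omega)
      rw [h1]
      have hcomp : (T^[n] ⁻¹' Z : Set _) = T^[i] ⁻¹' (T^[n - i] ⁻¹' Z) := by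
        have hni : n = (n - i) + i := by omega
        conv_lhs => rw [hni, Function.iterate_add, Set.preimage_comp]
      calc μ ((T^[i] ⁻¹' A) ∩ Z)
          = μ ((T^[i] ⁻¹' A) ∩ (T^[n] ⁻¹' Z)) :=
            (measure_congr (Filter.EventuallyEq.rfl.inter hZeq)).symm
        _ = μ (T^[i] ⁻¹' (A ∩ (T^[n - i] ⁻¹' Z))) := by
            rw [hcomp, ← Set.preimage_inter]
        _ = μ (A ∩ (T^[n - i] ⁻¹' Z)) :=
            (hmp i).measure_preimage (hA.inter (hZi (n - i))).nullMeasurableSet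
  -- (n - i) % n stays below n
  have hclt : ∀ i, i < n → (n - i) % n < n := fun i _ => Nat.mod_lt _ (by omega)
  -- injectivity of i ↦ (n - i) % n on [0, n)
  have hcinj : ∀ i j, i < n → j < n → i ≠ j → (n - i) % n ≠ (n - j) % n := by
    intro i j hi hj hij
    rcases Nat.eq_zero_or_pos i with h0 | hpos <;> rcases Nat.eq_zero_or_pos j with h0' | hpos'
    · omega
    · subst h0
      rw [Nat.sub_zero, Nat.mod_self, Nat.mod_eq_of_lt (by omega)]
      omega
    · subst h0'
      rw [Nat.sub_zero, Nat.mod_self, Nat.mod_eq_of_lt (by omega)]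
      omega
    · rw [Nat.mod_eq_of_lt (by omega), Nat.mod_eq_of_lt (by omega)]
      omega
  refine ⟨hμZ, ?_, ?_, ?_⟩
  · -- decomposition of μ
    ext A hA
    have hAi : ∀ i, MeasurableSet (A ∩ (T^[i] ⁻¹' Z)) := fun i => hA.inter (hZi i)
    have h1 : μ A = ∑ i ∈ Finset.range n, μ (A ∩ (T^[i] ⁻¹' Z)) := by
      have h2 : μ A = μ (A ∩ ⋃ i ∈ Finset.range n, T^[i] ⁻¹' Z) :=
        (measure_inter_conull hcover).symm
      rw [h2, Set.inter_iUnion₂]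
      exact measure_biUnion_finset₀
        (fun i hi j hj hij => measure_mono_null
          (by exact Set.inter_subset_inter Set.inter_subset_right Set.inter_subset_right)
          (hdisj i j (Finset.mem_range.mp hi) (Finset.mem_range.mp hj) hij))
        (fun i _ => (hAi i).nullMeasurableSet)
    rw [Measure.smul_apply, Measure.finset_sum_apply, smul_eq_mul]
    have h3 : ∀ i ∈ Finset.range n,
        (Measure.map (T^[i]) ((μ Z)⁻¹ • μ.restrict Z)) A
          = n * μ (A ∩ (T^[(n - i) % n] ⁻¹' Z)) := by
      intro i hi
      rw [hval i A hA, key i (Finset.mem_range.mp hi) A hA]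
    rw [Finset.sum_congr rfl h3, ← Finset.mul_sum, ← mul_assoc,
      ENNReal.inv_mul_cancel hn0 hntop, one_mul]
    rw [h1]
    refine (Finset.sum_nbij' (fun i => (n - i) % n) (fun i => (n - i) % n) ?_ ?_ ?_ ?_ ?_).symm
    · intro a ha; exact Finset.mem_range.mpr (hclt a (Finset.mem_range.mp ha))
    · intro a ha; exact Finset.mem_range.mpr (hclt a (Finset.mem_range.mp ha))
    · intro a ha
      have ha' := Finset.mem_range.mp ha
      show (n - (n - a) % n) % n = a
      rcases Nat.eq_zero_or_pos a with h0 | hpos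
      · subst h0; simp [Nat.mod_self]
      · have e1 : (n - a) % n = n - a := Nat.mod_eq_of_lt (by omega)
        rw [e1, Nat.mod_eq_of_lt (by omega)]; omega
    · intro a ha
      have ha' := Finset.mem_range.mp ha
      show (n - (n - a) % n) % n = a
      rcases Nat.eq_zero_or_pos a with h0 | hpos
      · subst h0; simp [Nat.mod_self]
      · have e1 : (n - a) % n = n - a := Nat.mod_eq_of_lt (by omega)
        rw [e1, Nat.mod_eq_of_lt (by omega)]; omega
    · intro a _; rfl
  · -- σⁿ-invariance
    intro i hi
    have hmap : Measure.map (T^[n]) ((μ Z)⁻¹ • μ.restrict Z) = (μ Z)⁻¹ • μ.restrict Z := by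
      ext A hA
      have h1 : (Measure.map (T^[n]) ((μ Z)⁻¹ • μ.restrict Z)) A = n * μ ((T^[n] ⁻¹' A) ∩ Z) :=
        hval n A hA
      have h2 : μ ((T^[n] ⁻¹' A) ∩ Z) = μ (A ∩ Z) := by
        calc μ ((T^[n] ⁻¹' A) ∩ Z)
            = μ ((T^[n] ⁻¹' A) ∩ (T^[n] ⁻¹' Z)) :=
              (measure_congr (Filter.EventuallyEq.rfl.inter hZeq)).symm
          _ = μ (T^[n] ⁻¹' (A ∩ Z)) := by rw [Set.preimage_inter]
          _ = μ (A ∩ Z) := (hmp n).measure_preimage (hA.inter hZ).nullMeasurableSet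
      rw [h1, h2, Measure.smul_apply, Measure.restrict_apply hA, hinvμZ, smul_eq_mul]
    calc Measure.map (T^[n]) (Measure.map (T^[i]) ((μ Z)⁻¹ • μ.restrict Z))
        = Measure.map (T^[n] ∘ T^[i]) ((μ Z)⁻¹ • μ.restrict Z) :=
          Measure.map_map (hTi n) (hTi i)
      _ = Measure.map (T^[i] ∘ T^[n]) ((μ Z)⁻¹ • μ.restrict Z) := by
          rw [← Function.iterate_add, ← Function.iterate_add, Nat.add_comm]
      _ = Measure.map (T^[i]) (Measure.map (T^[n]) ((μ Z)⁻¹ • μ.restrict Z)) :=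
          (Measure.map_map (hTi i) (hTi n)).symm
      _ = Measure.map (T^[i]) ((μ Z)⁻¹ • μ.restrict Z) := by rw [hmap]
  · -- mutual singularity
    intro i j hi hj hij
    refine ⟨(T^[(n - i) % n] ⁻¹' Z)ᶜ, (hZi _).compl, ?_, ?_⟩
    · rw [hval i _ (hZi _).compl, key i hi _ (hZi _).compl]
      simp
    · rw [hval j _ (hZi _).compl.compl, key j hj _ (hZi _).compl.compl, compl_compl]
      rw [hdisj _ _ (hclt i hi) (hclt j hj) (hcinj i j hi hj hij), mul_zero]
end
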